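/- For the Möbius strip parametrisation with 0 < w < R and R ≥ 1/4, the horizontal normal components N₁(r,s) and N₂(r,s) never vanish simultaneously for (r,s) ∈ [0,2π) × [−w,w]; i.e., the Möbius strip has no characteristic points when R ≥ 1/4. -/
import Mathlib


open Real

/-- First horizontal component of the Heisenberg normal of the Möbius strip. -/
noncomputable def N1 (R r s : ℝ) : ℝ :=
  -(s/2) * sin r + (R + s * cos (r/2)) * cos r * sin (r/2)
    + (1/2) * (R + s * cos (r/2))^2 * cos (r/2) * sin r

/-- Second horizontal component of the Heisenberg normal of the Möbius strip. -/
noncomputable def N2 (R r s : ℝ) : ℝ :=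
  (-(cos (r/2))^5 + (cos (r/2))^3 / 2) * s^2
    + (-2 * (R + 1) * (cos (r/2))^4 + (R + 3) * (cos (r/2))^2 - 1/2) * s
    - (R^2 + 2*R) * (cos (r/2))^3 + (R^2/2 + 2*R) * cos (r/2)

/-- when `R ≥ 1/4`, the Möbius strip has no characteristic
points: `N₁` and `N₂` never vanish simultaneously. -/
theorem mobius_no_characteristic_points (R w : ℝ) (hw : 0 < w) (hwR : w < R)
    (hR : (1/4 : ℝ) ≤ R) :
    ∀ r ∈ Set.Ico (0:ℝ) (2 * π), ∀ s ∈ Set.Icc (-w) w,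
      ¬ (N1 R r s = 0 ∧ N2 R r s = 0) := by
  rintro r ⟨hr0, hr2⟩ s ⟨hsl, hsu⟩ ⟨h1, h2⟩
  set y := Real.sin (r/2) with hy
  set z := Real.cos (r/2) with hz
  have hsinr : Real.sin r = 2 * y * z := by
    rw [show r = 2 * (r/2) by ring, Real.sin_two_mul]
  have hcosr : Real.cos r = 2 * z^2 - 1 := by
    rw [show r = 2 * (r/2) by ring, Real.cos_two_mul]
  set F : ℝ := z^4 * s^2 + (2*(R+1)*z^3 - 2*z) * s + (R^2 + 2*R)*z^2 - R with hF
  set G : ℝ := (z^3/2) * s^2 + ((R+1)*z^2 - 1/2) * s + (R^2/2 + R)*z with hG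
  have hN1 : N1 R r s = y * F := by
    rw [N1, hsinr, hcosr, hF]; ring
  have hN2 : N2 R r s = -z * F + G := by
    rw [N2, hF, hG]; ring
  rcases eq_or_lt_of_le hr0 with h0 | hpos
  · -- r = 0
    have hz1 : z = 1 := by rw [hz, ← h0]; norm_num
    have hsR : s < R := lt_of_le_of_lt hsu hwR
    have hsR' : -R < s := lt_of_lt_of_le (neg_lt_neg hwR) hsl
    have hq : s^2 + (2*R - 1)*s + R^2 = 0 := by
      have := h2
      rw [N2, ← hz, hz1] at this
      nlinarith [this]
    nlinarith [sq_nonneg (s - R), sq_nonneg (s + R), mul_pos (sub_pos.2 hsR) (sub_pos.2 hsR)]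
  · -- r > 0
    have hy_pos : 0 < y := by
      rw [hy]
      apply Real.sin_pos_of_pos_of_lt_pi (by linarith)
      linarith [hr2]
    have hF0 : F = 0 := by
      have := h1
      rw [hN1] at this
      rcases mul_eq_zero.1 this with h | h
      · exact absurd h (ne_of_gt hy_pos)
      · exact h
    have hG0 : G = 0 := by
      have := h2
      rw [hN2, hF0] at this
      linarith
    have hR0 : R = 0 := by
      linear_combination (z^3*s + (R+2)*z^2 - 1) * hF0
        + (-2*z^4*s - 2*(R+2)*z^3 + 4*z) * hG0
    linarith
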